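/- Let (X,d) be a metric, separable and zero-dimensional space with d ≤ 1, and assume d is an ultrametric. Then there exist a set A ⊆ ωω and a homeomorphism h : A → X such that h is Lipschitz with constant 1 and h⁻¹ : X → A is Lipschitz with constant 2 (with respect to d and the standard ultrametric that ωω induces on A). If moreover d is complete, the set A can be taken to be closed in ωω. -/
import Mathlib


open Set Metric TopologicalSpace

/- The Baire space `ℕ → ℕ` is equipped with the standard ultrametric
`dist x y = (1/2)^n` (for `x ≠ y`, `n` least with `x n ≠ y n`), and any
`A ⊆ ℕ → ℕ` carries the induced metric. -/
attribute [local instance] PiNat.metricSpaceNatNat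

theorem aux_embed {X : Type*} [MetricSpace X] [SeparableSpace X]
    (hultra : ∀ x y z : X, dist x z ≤ max (dist x y) (dist y z))
    (hbdd : ∀ x y : X, dist x y ≤ 1) :
    ∃ f : X → (ℕ → ℕ), Function.Injective f ∧
      (∀ x y, dist x y ≤ dist (f x) (f y)) ∧
      (∀ x y, dist (f x) (f y) ≤ 2 * dist x y) := by
  obtain ⟨D, Dcount, Ddense⟩ := TopologicalSpace.exists_countable_dense X
  set S : ℕ → Setoid X := fun n =>
    ⟨fun x y => dist x y ≤ (1/2 : ℝ) ^ (n+1), by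
      constructor
      · intro x; rw [dist_self]; positivity
      · intro x y h; rwa [dist_comm]
      · intro x y z hxy hyz
        exact le_trans (hultra x y z) (max_le hxy hyz)⟩
  have hcount : ∀ n : ℕ, ∃ e : Quotient (S n) → ℕ, Function.Injective e := by
    intro n
    have hc : Countable (Quotient (S n)) := by
      have : ∀ q : Quotient (S n), ∃ z : D, Quotient.mk (S n) z.1 = q := by
        intro q
        induction q using Quotient.ind with
        | _ x =>
          have hpos : (0:ℝ) < (1/2 : ℝ) ^ (n+1) := by positivity
          obtain ⟨z, hzD, hz⟩ := Ddense.exists_mem_open isOpen_ball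
            ⟨x, mem_ball_self hpos⟩
          refine ⟨⟨z, hzD⟩, Quotient.sound ?_⟩
          have : dist z x < (1/2 : ℝ) ^ (n+1) := mem_ball.1 hz
          exact le_of_lt this
      choose φ hφ using this
      have hinj : Function.Injective φ := by
        intro q1 q2 h
        rw [← hφ q1, ← hφ q2, h]
      have : Countable D := Dcount.to_subtype
      exact Function.Injective.countable hinj
    exact exists_injective_nat _
  choose e he using hcount
  set f : X → (ℕ → ℕ) := fun x n => e n (Quotient.mk (S n) x) with hf
  have key : ∀ x y n, f x n = f y n ↔ dist x y ≤ (1/2 : ℝ) ^ (n+1) := by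
    intro x y n
    constructor
    · intro h
      exact Quotient.exact (he n h)
    · intro h
      simp only [hf]
      exact congrArg (e n) (Quotient.sound h)
  have hinj : Function.Injective f := by
    intro x y h
    by_contra hne
    have hd : 0 < dist x y := dist_pos.2 hne
    obtain ⟨n, hn⟩ : ∃ n : ℕ, (1/2 : ℝ) ^ n < dist x y :=
      exists_pow_lt_of_lt_one hd (by norm_num)
    have h1 : dist x y ≤ (1/2 : ℝ) ^ (n+1) := (key x y n).1 (by rw [h])
    have h2 : (1/2 : ℝ) ^ (n+1) ≤ (1/2 : ℝ) ^ n :=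
      pow_le_pow_of_le_one (by norm_num) (by norm_num) (Nat.le_succ n)
    linarith
  refine ⟨f, hinj, ?_, ?_⟩
  · intro x y
    rcases eq_or_ne x y with rfl | hne
    · simp
    have hfne : f x ≠ f y := fun h => hne (hinj h)
    rw [PiNat.dist_eq_of_ne hfne]
    cases hN : PiNat.firstDiff (f x) (f y) with
    | zero => simpa using hbdd x y
    | succ m =>
      have hm : f x m = f y m := by
        apply PiNat.apply_eq_of_lt_firstDiff
        omega
      have := (key x y m).1 hm
      simpa using this
  · intro x y
    rcases eq_or_ne x y with rfl | hne
    · simp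
    have hfne : f x ≠ f y := fun h => hne (hinj h)
    rw [PiNat.dist_eq_of_ne hfne]
    set N := PiNat.firstDiff (f x) (f y) with hN
    have hne' : f x N ≠ f y N := PiNat.apply_firstDiff_ne hfne
    have h1 : ¬ dist x y ≤ (1/2 : ℝ) ^ (N+1) := fun h => hne' ((key x y N).2 h)
    push_neg at h1
    have : (1/2 : ℝ) ^ N = 2 * (1/2 : ℝ) ^ (N+1) := by ring
    rw [this]
    linarith

/-- Let `(X,d)` be a separable, zero-dimensional ultrametric space with `d ≤ 1`.
Then there are a set `A ⊆ ℕ → ℕ` and a homeomorphism `h : A → X` such that `h`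
is Lipschitz with constant `1` and `h⁻¹` is Lipschitz with constant `2`.  If
moreover `d` is complete, `A` can be taken closed in the Baire space. -/
theorem exists_bilipschitz_homeo_from_subset_of_baire_space
    {X : Type*} [MetricSpace X] [SeparableSpace X]
    (hzero : IsTopologicalBasis {s : Set X | IsClopen s})
    (hultra : ∀ x y z : X, dist x z ≤ max (dist x y) (dist y z))
    (hbdd : ∀ x y : X, dist x y ≤ 1) :
    (∃ A : Set (ℕ → ℕ), ∃ h : A ≃ₜ X,
      (∀ a b : A, dist (h a) (h b) ≤ 1 * dist a b) ∧
      (∀ x y : X, dist (h.symm x) (h.symm y) ≤ 2 * dist x y)) ∧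
    (CompleteSpace X →
      ∃ A : Set (ℕ → ℕ), IsClosed A ∧ ∃ h : A ≃ₜ X,
        (∀ a b : A, dist (h a) (h b) ≤ 1 * dist a b) ∧
        (∀ x y : X, dist (h.symm x) (h.symm y) ≤ 2 * dist x y)) := by
  obtain ⟨f, hinj, hlow, hup⟩ := aux_embed hultra hbdd
  set A : Set (ℕ → ℕ) := Set.range f with hA
  set E : X ≃ A := Equiv.ofInjective f hinj with hE
  have hEval : ∀ x : X, (E x : ℕ → ℕ) = f x := fun x => rfl
  have hEsymm : ∀ a : A, f (E.symm a) = (a : ℕ → ℕ) := fun a =>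
    Equiv.apply_ofInjective_symm hinj a
  have hdistA : ∀ a b : A, dist a b = dist (a : ℕ → ℕ) (b : ℕ → ℕ) := fun a b =>
    Subtype.dist_eq a b
  have hglip : ∀ a b : A, dist (E.symm a) (E.symm b) ≤ dist a b := by
    intro a b
    calc dist (E.symm a) (E.symm b) ≤ dist (f (E.symm a)) (f (E.symm b)) := hlow _ _
    _ = dist a b := by rw [hEsymm, hEsymm, hdistA]
  have hElip : ∀ x y : X, dist (E x) (E y) ≤ 2 * dist x y := by
    intro x y
    rw [hdistA, hEval, hEval]
    exact hup x y
  have hcontg : Continuous (fun a : A => E.symm a) := by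
    rw [Metric.continuous_iff]
    intro a ε hε
    exact ⟨ε, hε, fun b hb => lt_of_le_of_lt (hglip b a) hb⟩
  have hcontE : Continuous (fun x : X => E x) := by
    rw [Metric.continuous_iff]
    intro x ε hε
    refine ⟨ε/2, by linarith, fun y hy => ?_⟩
    calc dist (E y) (E x) ≤ 2 * dist y x := hElip y x
    _ < ε := by linarith
  set h : A ≃ₜ X := ⟨E.symm, hcontg, hcontE⟩ with hh
  have main : ∃ h : A ≃ₜ X,
      (∀ a b : A, dist (h a) (h b) ≤ 1 * dist a b) ∧
      (∀ x y : X, dist (h.symm x) (h.symm y) ≤ 2 * dist x y) := by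
    refine ⟨h, fun a b => ?_, fun x y => ?_⟩
    · rw [one_mul]; exact hglip a b
    · exact hElip x y
  refine ⟨⟨A, main⟩, fun hcomp => ⟨A, ?_, main⟩⟩
  have hanti : AntilipschitzWith 1 f := by
    apply AntilipschitzWith.of_le_mul_dist
    intro x y
    simpa using hlow x y
  have hlipf : LipschitzWith 2 f := by
    apply LipschitzWith.of_dist_le_mul
    intro x y
    simpa using hup x y
  exact hanti.isClosed_range hlipf.uniformContinuous
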